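/- Let b : ℝ^d → ℝ^d be globally Lipschitz with constant L and |b(0)| ≤ L, and let σ = I_d be the identity matrix. Fix θ ∈ [0,1]. With A(φ) = (1/2)∫₀^T |φ'(t) − b(φ(t))|² dt and B_h(φ) = (1/2)∫₀^T |φ'(t) − b((1−θ)φ(t̂) + θφ(ť))|² dt, for every R > 0 there exists a constant K₂(R) > 0 such that for all h = T/N with h ∈ (0,1], sup{ |A(φ) − B_h(φ)| : φ ∈ H¹_{x₀}(0,T;ℝ^d), ‖φ‖_{H¹} ≤ R } ≤ K₂(R) h. -/

import Mathlib

open MeasureTheory Set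

/-- Largest grid point `t_n = n h` below `t`. -/
noncomputable def gridHat (h t : ℝ) : ℝ := h * ⌊t / h⌋

/-- Smallest grid point `t_n = n h` above `t`. -/
noncomputable def gridCheck (h t : ℝ) : ℝ := h * ⌈t / h⌉

/-!
Write `f = ‖φ'‖`. On a grid cell `[t_k, t_{k+1}]` the path moves by at most `c_k = ∫_{cell} f`,
so `φ(t̂)`, `φ(ť)` and their convex combination `v(t) = (1-θ)φ(t̂) + θφ(ť)` all lie in the ball
of radius `c_k` around `φ(t)`. With `C` a bound for `b` along the path and `v`, the identity
`‖a-y‖² - ‖a-z‖² = (‖a-y‖ + ‖a-z‖)(‖a-y‖ - ‖a-z‖)` and the Lipschitz bound make the two integrands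
differ by at most `2L c_k (f + C)` on the cell. Integrating and using Cauchy–Schwarz
`c_k² ≤ h ∫_{cell} f²` gives `2Lh ∫_{cell} (f² + C f)`, and summing over the cells bounds the
error by `2Lh (‖φ'‖²_{L²} + C ‖φ'‖_{L¹}) ≤ 2Lh (R² + C √T R)`.
-/

open Metric

theorem sq_intervalIntegral_le_mul_integral_sq {f : ℝ → ℝ} {a b : ℝ} (hab : a ≤ b)
    (hf : IntervalIntegrable f volume a b)
    (hf2 : IntervalIntegrable (fun x => f x ^ 2) volume a b) :
    (∫ x in a..b, f x) ^ 2 ≤ (b - a) * ∫ x in a..b, f x ^ 2 := by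
  rcases hab.eq_or_lt with rfl | hlt
  · simp
  have hba : 0 < b - a := sub_pos.2 hlt
  set m := (∫ x in a..b, f x) / (b - a) with hm
  -- expand `0 ≤ ∫ (f - m)²` with `m` the mean of `f`
  have hvar : 0 ≤ ∫ x in a..b, (f x ^ 2 - 2 * m * f x + m ^ 2) :=
    intervalIntegral.integral_nonneg hab fun x _ => by nlinarith [sq_nonneg (f x - m)]
  rw [intervalIntegral.integral_add (hf2.sub (hf.const_mul _)) intervalIntegrable_const,
    intervalIntegral.integral_sub hf2 (hf.const_mul _), intervalIntegral.integral_const_mul,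
    intervalIntegral.integral_const, smul_eq_mul] at hvar
  have hmean : ∫ x in a..b, f x = m * (b - a) := by rw [hm, div_mul_cancel₀ _ hba.ne']
  rw [hmean] at hvar ⊢
  nlinarith

theorem intervalIntegral_le_sqrt_mul_sqrt_integral_sq {f : ℝ → ℝ} {a b : ℝ} (hab : a ≤ b)
    (hf : IntervalIntegrable f volume a b)
    (hf2 : IntervalIntegrable (fun x => f x ^ 2) volume a b) :
    ∫ x in a..b, f x ≤ √(b - a) * √(∫ x in a..b, f x ^ 2) :=
  calc ∫ x in a..b, f x ≤ √((∫ x in a..b, f x) ^ 2) :=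
        (le_abs_self _).trans (Real.sqrt_sq_eq_abs _).ge
    _ ≤ √((b - a) * ∫ x in a..b, f x ^ 2) :=
        Real.sqrt_le_sqrt (sq_intervalIntegral_le_mul_integral_sq hab hf hf2)
    _ = √(b - a) * √(∫ x in a..b, f x ^ 2) := Real.sqrt_mul (sub_nonneg.2 hab) _

section Grid

variable {h : ℝ}

theorem gridHat_le (hh : 0 < h) (t : ℝ) : gridHat h t ≤ t :=
  calc gridHat h t ≤ h * (t / h) := mul_le_mul_of_nonneg_left (Int.floor_le _) hh.le
    _ = t := mul_div_cancel₀ t hh.ne'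

theorem le_gridCheck (hh : 0 < h) (t : ℝ) : t ≤ gridCheck h t :=
  calc t = h * (t / h) := (mul_div_cancel₀ t hh.ne').symm
    _ ≤ gridCheck h t := mul_le_mul_of_nonneg_left (Int.le_ceil _) hh.le

theorem le_gridHat (hh : 0 < h) {m : ℕ} {t : ℝ} (ht : m * h ≤ t) : m * h ≤ gridHat h t := by
  rw [gridHat, mul_comm h]
  gcongr
  exact_mod_cast Int.le_floor.2 ((le_div_iff₀ hh).2 ht)

theorem gridCheck_le (hh : 0 < h) {m : ℕ} {t : ℝ} (ht : t ≤ m * h) : gridCheck h t ≤ m * h := by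
  rw [gridCheck, mul_comm h]
  gcongr
  exact_mod_cast Int.ceil_le.2 ((div_le_iff₀ hh).2 ht)

theorem gridHat_mem_Icc (hh : 0 < h) {m n : ℕ} {t : ℝ} (ht : t ∈ Icc (m * h) (n * h)) :
    gridHat h t ∈ Icc (m * h) (n * h) :=
  ⟨le_gridHat hh ht.1, (gridHat_le hh t).trans ht.2⟩

theorem gridCheck_mem_Icc (hh : 0 < h) {m n : ℕ} {t : ℝ} (ht : t ∈ Icc (m * h) (n * h)) :
    gridCheck h t ∈ Icc (m * h) (n * h) :=
  ⟨ht.1.trans (le_gridCheck hh t), gridCheck_le hh ht.2⟩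

theorem stronglyMeasurable_comp_gridHat_gridCheck {X : Type*} [TopologicalSpace X] (h : ℝ)
    (F : ℝ → ℝ → X) : StronglyMeasurable fun t => F (gridHat h t) (gridCheck h t) :=
  (StronglyMeasurable.of_discrete (f := fun p : ℤ × ℤ => F (h * p.1) (h * p.2))).comp_measurable
    ((measurable_id.div_const h).floor.prodMk (measurable_id.div_const h).ceil)

end Grid

theorem norm_one_sub_smul_add_smul_le {E : Type*} [SeminormedAddCommGroup E] [NormedSpace ℝ E]
    {x y : E} {θ M : ℝ} (hθ0 : 0 ≤ θ) (hθ1 : θ ≤ 1) (hx : ‖x‖ ≤ M) (hy : ‖y‖ ≤ M) :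
    ‖(1 - θ) • x + θ • y‖ ≤ M :=
  mem_closedBall_zero_iff.1 <| convex_closedBall 0 M (mem_closedBall_zero_iff.2 hx)
    (mem_closedBall_zero_iff.2 hy) (sub_nonneg.2 hθ1) hθ0 (sub_add_cancel 1 θ)

theorem abs_sq_norm_sub_sub_sq_norm_sub_le {E : Type*} [SeminormedAddCommGroup E]
    {C : ℝ} (a : E) {y z : E} (hy : ‖y‖ ≤ C) (hz : ‖z‖ ≤ C) :
    |‖a - y‖ ^ 2 - ‖a - z‖ ^ 2| ≤ 2 * ‖y - z‖ * (‖a‖ + C) := by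
  have hdiff : |‖a - y‖ - ‖a - z‖| ≤ ‖y - z‖ := by
    simpa [norm_sub_rev y z] using abs_norm_sub_norm_le (a - y) (a - z)
  have hsum : ‖a - y‖ + ‖a - z‖ ≤ 2 * (‖a‖ + C) := by
    linarith [norm_sub_le a y, norm_sub_le a z]
  calc |‖a - y‖ ^ 2 - ‖a - z‖ ^ 2| = (‖a - y‖ + ‖a - z‖) * |‖a - y‖ - ‖a - z‖| := by
        rw [sq_sub_sq, abs_mul, abs_of_nonneg (by positivity)]
    _ ≤ 2 * (‖a‖ + C) * ‖y - z‖ :=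
        mul_le_mul hsum hdiff (abs_nonneg _) (by linarith [norm_nonneg a, norm_nonneg y])
    _ = 2 * ‖y - z‖ * (‖a‖ + C) := by ring

theorem LipschitzWith.norm_le_norm_zero_add_mul {E F : Type*} [SeminormedAddCommGroup E]
    [SeminormedAddCommGroup F] {K : NNReal} {f : E → F} (hf : LipschitzWith K f) (x : E) :
    ‖f x‖ ≤ ‖f 0‖ + K * ‖x‖ := by
  have := hf.dist_le_mul x 0
  rw [dist_eq_norm, dist_eq_norm, sub_zero] at this
  linarith [norm_le_insert' (f x) (f 0)]

theorem integral_le_integral_of_adjacent_intervals_le {F G : ℝ → ℝ} {a : ℕ → ℝ} {n : ℕ}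
    (ha : Monotone a) (hF : IntervalIntegrable F volume (a 0) (a n))
    (hG : IntervalIntegrable G volume (a 0) (a n))
    (hle : ∀ k < n, ∫ x in a k..a (k + 1), F x ≤ ∫ x in a k..a (k + 1), G x) :
    ∫ x in a 0..a n, F x ≤ ∫ x in a 0..a n, G x := by
  have hsub : ∀ k < n, uIcc (a k) (a (k + 1)) ⊆ uIcc (a 0) (a n) := fun k hk => by
    rw [uIcc_of_le (ha k.le_succ), uIcc_of_le (ha (Nat.zero_le n))]
    exact Icc_subset_Icc (ha (Nat.zero_le k)) (ha hk)
  rw [← intervalIntegral.sum_integral_adjacent_intervals fun k hk => hF.mono_set (hsub k hk),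
    ← intervalIntegral.sum_integral_adjacent_intervals fun k hk => hG.mono_set (hsub k hk)]
  exact Finset.sum_le_sum fun k hk => hle k (Finset.mem_range.1 hk)

theorem integral_le_mul_integral_of_le_mul_integral {F f : ℝ → ℝ} {a b K C : ℝ} (hab : a ≤ b)
    (hK : 0 ≤ K) (hF : IntervalIntegrable F volume a b) (hf : IntervalIntegrable f volume a b)
    (hf2 : IntervalIntegrable (fun x => f x ^ 2) volume a b)
    (hle : ∀ t ∈ Icc a b, F t ≤ K * (∫ x in a..b, f x) * (f t + C)) :
    ∫ x in a..b, F x ≤ K * (b - a) * ((∫ x in a..b, f x ^ 2) + C * ∫ x in a..b, f x) := by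
  set c := ∫ x in a..b, f x
  calc ∫ x in a..b, F x ≤ ∫ x in a..b, K * c * (f x + C) :=
        intervalIntegral.integral_mono_on hab hF ((hf.add intervalIntegrable_const).const_mul _) hle
    _ = K * (c ^ 2 + (b - a) * C * c) := by
        rw [intervalIntegral.integral_const_mul, intervalIntegral.integral_add hf
          intervalIntegrable_const, intervalIntegral.integral_const, smul_eq_mul]
        ring
    _ ≤ K * ((b - a) * (∫ x in a..b, f x ^ 2) + (b - a) * C * c) := by
        gcongr
        exact sq_intervalIntegral_le_mul_integral_sq hab hf hf2
    _ = K * (b - a) * ((∫ x in a..b, f x ^ 2) + C * c) := by ring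

theorem integrable_sq_norm_sub {α E : Type*} [MeasurableSpace α] [NormedAddCommGroup E]
    {μ : Measure α} [IsFiniteMeasure μ] {u w : α → E} {C : ℝ} (hu : AEStronglyMeasurable u μ)
    (hu2 : Integrable (fun x => ‖u x‖ ^ 2) μ) (hw : AEStronglyMeasurable w μ)
    (hwC : ∀ᵐ x ∂μ, ‖w x‖ ≤ C) :
    Integrable (fun x => ‖u x - w x‖ ^ 2) μ :=
  (memLp_two_iff_integrable_sq_norm (hu.sub hw)).1
    (((memLp_two_iff_integrable_sq_norm hu).2 hu2).sub (MemLp.of_bound hw C hwC))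

section Primitive

variable {E : Type*} [NormedAddCommGroup E] [NormedSpace ℝ E] {φ φ' : ℝ → E} {x₀ : E} {T : ℝ}

theorem norm_sub_le_integral_norm_of_mem_Icc (hφ' : IntegrableOn φ' (Icc 0 T))
    (hφ : ∀ t ∈ Icc 0 T, φ t = x₀ + ∫ s in 0..t, φ' s) {α β s t : ℝ}
    (hαβ : Icc α β ⊆ Icc 0 T) (hs : s ∈ Icc α β) (ht : t ∈ Icc α β) :
    ‖φ t - φ s‖ ≤ ∫ u in α..β, ‖φ' u‖ := by
  wlog hst : s ≤ t generalizing s t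
  · rw [norm_sub_rev]
    exact this ht hs (le_of_not_ge hst)
  have hs' := hαβ hs
  have ht' := hαβ ht
  have h0 : (0 : ℝ) ∈ Icc 0 T := left_mem_Icc.2 (hs'.1.trans hs'.2)
  have hnorm : IntegrableOn (fun u => ‖φ' u‖) (Icc 0 T) := hφ'.norm
  have hii : ∀ {u v}, u ∈ Icc 0 T → v ∈ Icc 0 T → IntervalIntegrable φ' volume u v :=
    fun hu hv => (hφ'.mono_set (uIcc_subset_Icc hu hv)).intervalIntegrable
  calc ‖φ t - φ s‖ = ‖∫ u in s..t, φ' u‖ := by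
        rw [hφ t ht', hφ s hs', add_sub_add_left_eq_sub,
          intervalIntegral.integral_interval_sub_left (hii h0 ht') (hii h0 hs')]
    _ ≤ ∫ u in s..t, ‖φ' u‖ := intervalIntegral.norm_integral_le_integral_norm hst
    _ ≤ ∫ u in α..β, ‖φ' u‖ :=
        intervalIntegral.integral_mono_interval hs.1 hst ht.2 (ae_of_all _ fun _ => norm_nonneg _)
          (hnorm.mono_set (by rwa [uIcc_of_le (hs.1.trans hs.2)])).intervalIntegrable

theorem norm_le_norm_add_integral_norm (hφ' : IntegrableOn φ' (Icc 0 T))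
    (hφ : ∀ t ∈ Icc 0 T, φ t = x₀ + ∫ s in 0..t, φ' s) {t : ℝ} (ht : t ∈ Icc 0 T) :
    ‖φ t‖ ≤ ‖x₀‖ + ∫ u in 0..T, ‖φ' u‖ := by
  have h0 : (0 : ℝ) ∈ Icc 0 T := left_mem_Icc.2 (ht.1.trans ht.2)
  have hφ0 : φ 0 = x₀ := by simpa using hφ 0 h0
  calc ‖φ t‖ ≤ ‖φ 0‖ + ‖φ t - φ 0‖ := norm_le_insert' _ _
    _ ≤ ‖x₀‖ + ∫ u in 0..T, ‖φ' u‖ := by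
        rw [← hφ0]
        gcongr
        exact norm_sub_le_integral_norm_of_mem_Icc hφ' hφ subset_rfl h0 ht

theorem continuousOn_of_eq_add_integral (hT : 0 ≤ T) (hφ' : IntegrableOn φ' (Icc 0 T))
    (hφ : ∀ t ∈ Icc 0 T, φ t = x₀ + ∫ s in 0..t, φ' s) : ContinuousOn φ (Icc 0 T) := by
  rw [← uIcc_of_le hT] at hφ' ⊢
  exact (continuousOn_const.add (intervalIntegral.continuousOn_primitive_interval hφ')).congr
    fun t ht => hφ t (by rwa [← uIcc_of_le hT])

variable {b : E → E} {L : NNReal} {θ M C : ℝ}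

theorem abs_sq_norm_sub_sub_sq_norm_sub_combo_le (hφ' : IntegrableOn φ' (Icc 0 T))
    (hφ : ∀ t ∈ Icc 0 T, φ t = x₀ + ∫ s in 0..t, φ' s) (hb : LipschitzWith L b)
    (hθ0 : 0 ≤ θ) (hθ1 : θ ≤ 1) (hφM : ∀ t ∈ Icc 0 T, ‖φ t‖ ≤ M)
    (hbM : ∀ x, ‖x‖ ≤ M → ‖b x‖ ≤ C) {α β t p q : ℝ} (hαβ : Icc α β ⊆ Icc 0 T)
    (ht : t ∈ Icc α β) (hp : p ∈ Icc α β) (hq : q ∈ Icc α β) (y : E) :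
    |‖y - b (φ t)‖ ^ 2 - ‖y - b ((1 - θ) • φ p + θ • φ q)‖ ^ 2| ≤
      2 * L * (∫ u in α..β, ‖φ' u‖) * (‖y‖ + C) := by
  set c := ∫ u in α..β, ‖φ' u‖
  set v := (1 - θ) • φ p + θ • φ q
  have hnear : ∀ r ∈ Icc α β, φ r ∈ closedBall (φ t) c := fun r hr =>
    mem_closedBall_iff_norm.2 (norm_sub_le_integral_norm_of_mem_Icc hφ' hφ hαβ ht hr)
  have hv : v ∈ closedBall (φ t) c :=
    convex_closedBall _ _ (hnear p hp) (hnear q hq) (by linarith) hθ0 (by ring)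
  have hvM : ‖v‖ ≤ M :=
    norm_one_sub_smul_add_smul_le hθ0 hθ1 (hφM p (hαβ hp)) (hφM q (hαβ hq))
  have hφt := hbM _ (hφM t (hαβ ht))
  calc |‖y - b (φ t)‖ ^ 2 - ‖y - b v‖ ^ 2| ≤ 2 * ‖b (φ t) - b v‖ * (‖y‖ + C) :=
        abs_sq_norm_sub_sub_sq_norm_sub_le y hφt (hbM v hvM)
    _ ≤ 2 * (L * c) * (‖y‖ + C) := by
        gcongr
        · linarith [norm_nonneg y, norm_nonneg (b (φ t))]
        rw [← dist_eq_norm]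
        exact (hb.dist_le_mul _ _).trans (by gcongr; exact dist_comm v (φ t) ▸ hv)
    _ = 2 * L * c * (‖y‖ + C) := by ring

theorem integral_abs_sq_norm_sub_sub_grid_le_of_cell (hφ' : IntegrableOn φ' (Icc 0 T))
    (hφ'2 : IntegrableOn (fun t => ‖φ' t‖ ^ 2) (Icc 0 T))
    (hφ : ∀ t ∈ Icc 0 T, φ t = x₀ + ∫ s in 0..t, φ' s) (hb : LipschitzWith L b)
    (hθ0 : 0 ≤ θ) (hθ1 : θ ≤ 1) (hφM : ∀ t ∈ Icc 0 T, ‖φ t‖ ≤ M)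
    (hbM : ∀ x, ‖x‖ ≤ M → ‖b x‖ ≤ C) {h : ℝ} (hh : 0 < h) {k : ℕ}
    (hcell : Icc ((k : ℝ) * h) (((k + 1 : ℕ) : ℝ) * h) ⊆ Icc 0 T)
    (hF : IntervalIntegrable (fun t => |‖φ' t - b (φ t)‖ ^ 2 -
      ‖φ' t - b ((1 - θ) • φ (gridHat h t) + θ • φ (gridCheck h t))‖ ^ 2|)
      volume (k * h) ((k + 1 : ℕ) * h)) :
    ∫ t in (k : ℝ) * h..((k + 1 : ℕ) : ℝ) * h, |‖φ' t - b (φ t)‖ ^ 2 -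
        ‖φ' t - b ((1 - θ) • φ (gridHat h t) + θ • φ (gridCheck h t))‖ ^ 2| ≤
      ∫ t in (k : ℝ) * h..((k + 1 : ℕ) : ℝ) * h, 2 * L * h * (‖φ' t‖ ^ 2 + C * ‖φ' t‖) := by
  have hkh : (k : ℝ) * h ≤ ((k + 1 : ℕ) : ℝ) * h := by gcongr; omega
  have hii : ∀ {F : ℝ → ℝ}, IntegrableOn F (Icc 0 T) →
      IntervalIntegrable F volume (k * h) ((k + 1 : ℕ) * h) := fun hG =>
    (hG.mono_set (by rwa [uIcc_of_le hkh])).intervalIntegrable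
  have hf : IntegrableOn (fun t => ‖φ' t‖) (Icc 0 T) := hφ'.norm
  calc _ ≤ 2 * L * (((k + 1 : ℕ) : ℝ) * h - k * h) *
        ((∫ t in (k : ℝ) * h..((k + 1 : ℕ) : ℝ) * h, ‖φ' t‖ ^ 2) +
          C * ∫ t in (k : ℝ) * h..((k + 1 : ℕ) : ℝ) * h, ‖φ' t‖) :=
        integral_le_mul_integral_of_le_mul_integral hkh (by positivity) hF (hii hf) (hii hφ'2)
          fun t ht => abs_sq_norm_sub_sub_sq_norm_sub_combo_le hφ' hφ hb hθ0 hθ1 hφM hbM hcell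
            ht (gridHat_mem_Icc hh ht) (gridCheck_mem_Icc hh ht) (φ' t)
    _ = _ := by
        rw [intervalIntegral.integral_const_mul, intervalIntegral.integral_add (hii hφ'2)
          ((hii hf).const_mul C), intervalIntegral.integral_const_mul]
        push_cast
        ring

theorem abs_integral_sq_norm_sub_sub_integral_grid_le (hφ' : IntegrableOn φ' (Icc 0 T))
    (hφ'2 : IntegrableOn (fun t => ‖φ' t‖ ^ 2) (Icc 0 T))
    (hφ : ∀ t ∈ Icc 0 T, φ t = x₀ + ∫ s in 0..t, φ' s) (hb : LipschitzWith L b)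
    (hθ0 : 0 ≤ θ) (hθ1 : θ ≤ 1) (hφM : ∀ t ∈ Icc 0 T, ‖φ t‖ ≤ M)
    (hbM : ∀ x, ‖x‖ ≤ M → ‖b x‖ ≤ C) {h : ℝ} (hh : 0 < h) {N : ℕ} (hNh : N * h = T) :
    |(∫ t in 0..T, ‖φ' t - b (φ t)‖ ^ 2) -
        ∫ t in 0..T, ‖φ' t - b ((1 - θ) • φ (gridHat h t) + θ • φ (gridCheck h t))‖ ^ 2| ≤
      2 * L * h * ((∫ t in 0..T, ‖φ' t‖ ^ 2) + C * ∫ t in 0..T, ‖φ' t‖) := by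
  subst hNh
  have hT : 0 ≤ (N : ℝ) * h := by positivity
  have hii : ∀ {F : ℝ → ℝ}, IntegrableOn F (Icc 0 (N * h)) →
      IntervalIntegrable F volume 0 (N * h) :=
    (intervalIntegrable_iff_integrableOn_Icc_of_le hT).2
  have hsq : ∀ w : ℝ → E, AEStronglyMeasurable w (volume.restrict (Icc 0 (N * h))) →
      (∀ t ∈ Icc 0 (N * h), ‖w t‖ ≤ C) →
      IntervalIntegrable (fun t => ‖φ' t - w t‖ ^ 2) volume 0 (N * h) := fun w hw hwC =>
    hii (integrable_sq_norm_sub hφ'.aestronglyMeasurable hφ'2 hw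
      ((ae_restrict_mem measurableSet_Icc).mono hwC))
  have hX := hsq (fun t => b (φ t)) ((hb.continuous.comp_continuousOn
    (continuousOn_of_eq_add_integral hT hφ' hφ)).aestronglyMeasurable measurableSet_Icc)
    fun t ht => hbM _ (hφM t ht)
  have hgrid : ∀ t ∈ Icc 0 (N * h), gridHat h t ∈ Icc 0 (N * h) ∧ gridCheck h t ∈ Icc 0 (N * h) :=
    fun t ht => by
      have ht' : t ∈ Icc (((0 : ℕ) : ℝ) * h) (N * h) := by simpa using ht
      simpa using And.intro (gridHat_mem_Icc hh ht') (gridCheck_mem_Icc hh ht')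
  have hY := hsq _ (stronglyMeasurable_comp_gridHat_gridCheck h
    fun p q => b ((1 - θ) • φ p + θ • φ q)).aestronglyMeasurable fun t ht =>
      hbM _ (norm_one_sub_smul_add_smul_le hθ0 hθ1 (hφM _ (hgrid t ht).1) (hφM _ (hgrid t ht).2))
  have hf : IntervalIntegrable (fun t => ‖φ' t‖) volume 0 (N * h) := hii hφ'.norm
  have hf2 := hii hφ'2
  have hcells := integral_le_integral_of_adjacent_intervals_le (a := fun k : ℕ => k * h)
    (fun _ _ hij => by dsimp only; gcongr) (by simpa using (hX.sub hY).abs)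
    (by simpa using (hf2.add (hf.const_mul C)).const_mul (2 * L * h)) fun k hk =>
      integral_abs_sq_norm_sub_sub_grid_le_of_cell hφ' hφ'2 hφ hb hθ0 hθ1 hφM hbM hh
        (Icc_subset_Icc (by positivity) (by gcongr; omega)) ((hX.sub hY).abs.mono_set (by
          rw [uIcc_of_le (by gcongr; omega), uIcc_of_le hT]
          exact Icc_subset_Icc (by positivity) (by gcongr; omega)))
  rw [← intervalIntegral.integral_sub hX hY, ← intervalIntegral.integral_const_mul C,
    ← intervalIntegral.integral_add hf2 (hf.const_mul C), ← intervalIntegral.integral_const_mul]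
  exact (intervalIntegral.abs_integral_le_integral_abs hT).trans (by simpa using hcells)

end Primitive

theorem A_Bh_uniform_error_additive_general
    (d : ℕ) (T : ℝ) (hT : 0 < T)
    (x₀ : EuclideanSpace ℝ (Fin d)) (L : NNReal)
    (θ : ℝ) (hθ0 : 0 ≤ θ) (hθ1 : θ ≤ 1)
    (b : EuclideanSpace ℝ (Fin d) → EuclideanSpace ℝ (Fin d))
    (hb : LipschitzWith L b) :
    ∀ R : ℝ, 0 < R → ∃ K₂ : ℝ, 0 < K₂ ∧
      ∀ N : ℕ, 0 < N → T / (N : ℝ) ≤ 1 →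
      ∀ φ φ' : ℝ → EuclideanSpace ℝ (Fin d),
        IntegrableOn φ' (Icc 0 T) →
        IntegrableOn (fun t => ‖φ' t‖ ^ 2) (Icc 0 T) →
        (∀ t ∈ Icc (0 : ℝ) T, φ t = x₀ + ∫ s in (0 : ℝ)..t, φ' s) →
        Real.sqrt (∫ t in (0 : ℝ)..T, ‖φ' t‖ ^ 2) ≤ R →
        |((1 / 2) * ∫ t in (0 : ℝ)..T, ‖φ' t - b (φ t)‖ ^ 2) -
          ((1 / 2) * ∫ t in (0 : ℝ)..T,
            ‖φ' t - b ((1 - θ) • φ (gridHat (T / (N : ℝ)) t)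
              + θ • φ (gridCheck (T / (N : ℝ)) t))‖ ^ 2)| ≤
          K₂ * (T / (N : ℝ)) := by
  intro R hR
  set C := ‖b 0‖ + L * (‖x₀‖ + √T * R) with hC
  refine ⟨L * (R ^ 2 + C * (√T * R)) + 1, by positivity, ?_⟩
  intro N hN _ φ φ' hφ' hφ'2 hφ hRb
  have hii : ∀ {F : ℝ → ℝ}, IntegrableOn F (Icc 0 T) → IntervalIntegrable F volume 0 T :=
    (intervalIntegrable_iff_integrableOn_Icc_of_le hT.le).2
  have hL2 : ∫ t in 0..T, ‖φ' t‖ ^ 2 ≤ R ^ 2 := (Real.sqrt_le_left hR.le).1 hRb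
  have hL1 : ∫ t in 0..T, ‖φ' t‖ ≤ √T * R :=
    (intervalIntegral_le_sqrt_mul_sqrt_integral_sq hT.le (hii hφ'.norm) (hii hφ'2)).trans
      (by rw [sub_zero]; gcongr)
  have hcore := abs_integral_sq_norm_sub_sub_integral_grid_le hφ' hφ'2 hφ hb hθ0 hθ1
    (M := ‖x₀‖ + √T * R) (C := C)
    (fun t ht => (norm_le_norm_add_integral_norm hφ' hφ ht).trans (by gcongr))
    (fun x hx => (hb.norm_le_norm_zero_add_mul x).trans (by rw [hC]; gcongr)) (h := T / N)
    (by positivity) (N := N) (by field_simp)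
  rw [← mul_sub, abs_mul, abs_of_pos (by norm_num : (0 : ℝ) < 1 / 2)]
  calc _ ≤ 1 / 2 * (2 * L * (T / N) * (R ^ 2 + C * (√T * R))) := by
        gcongr
        exact hcore.trans (by gcongr)
    _ = L * (R ^ 2 + C * (√T * R)) * (T / N) := by ring
    _ ≤ _ := by gcongr; linarith

/-- In the additive-noise case `σ = I_d`, with
`A(φ) = ½∫₀ᵀ |φ'(t) − b(φ(t))|² dt` and
`B_h(φ) = ½∫₀ᵀ |φ'(t) − b((1−θ)φ(t̂) + θφ(ť))|² dt`, for every `R > 0` there is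
`K₂(R) > 0` such that for all `h = T/N ∈ (0,1]`,
`|A(φ) − B_h(φ)| ≤ K₂(R) h` uniformly over `φ ∈ H¹_{x₀}` with `‖φ‖_{H¹} ≤ R`. -/
theorem A_Bh_uniform_error_additive
    (d : ℕ) (hd : 1 ≤ d) (T : ℝ) (hT : 0 < T)
    (x₀ : EuclideanSpace ℝ (Fin d)) (L : NNReal) (hL : 0 < L)
    (θ : ℝ) (hθ0 : 0 ≤ θ) (hθ1 : θ ≤ 1)
    (b : EuclideanSpace ℝ (Fin d) → EuclideanSpace ℝ (Fin d))
    (hb : LipschitzWith L b) (hbound : ‖b 0‖ ≤ (L : ℝ)) :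
    ∀ R : ℝ, 0 < R → ∃ K₂ : ℝ, 0 < K₂ ∧
      ∀ N : ℕ, 0 < N → T / (N : ℝ) ≤ 1 →
      ∀ φ φ' : ℝ → EuclideanSpace ℝ (Fin d),
        IntegrableOn φ' (Icc 0 T) →
        IntegrableOn (fun t => ‖φ' t‖ ^ 2) (Icc 0 T) →
        (∀ t ∈ Icc (0 : ℝ) T, φ t = x₀ + ∫ s in (0 : ℝ)..t, φ' s) →
        Real.sqrt (∫ t in (0 : ℝ)..T, ‖φ' t‖ ^ 2) ≤ R →
        |((1 / 2) * ∫ t in (0 : ℝ)..T, ‖φ' t - b (φ t)‖ ^ 2) -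
          ((1 / 2) * ∫ t in (0 : ℝ)..T,
            ‖φ' t - b ((1 - θ) • φ (gridHat (T / (N : ℝ)) t)
              + θ • φ (gridCheck (T / (N : ℝ)) t))‖ ^ 2)| ≤
          K₂ * (T / (N : ℝ)) :=
  A_Bh_uniform_error_additive_general d T hT x₀ L θ hθ0 hθ1 b hb
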